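/- For every integer n ≥ 1, κ_{2n−1}² = [a_n² + b_n²(1 + β_n²)]^{−1}. -/

import Mathlib

/-!
Write `m = 2n - 1`. On the unit circle `f(z) = z^{-(n-1)} Φ_m(z)` has `|f| = |Φ_m|`, equals
`z^n` plus a combination of `cos kθ, sin kθ` with `k < n`, and the orthogonality of `Φ_m` to
`1, z, …, z^{m-1}` says precisely that `f` is `⟨·,·⟩_R`-orthogonal to these `cos kθ, sin kθ`.
The function `g = a_n σ_n + (β_n + i) b_n π_n` has the same two properties: pairing `a_n σ_n`
with `b_n π_n` shows that the coefficient of `sin nθ` in `a_n σ_n` is `-β_n`, so that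
`g = cos nθ + i sin nθ + (lower order) = z^n + (lower order)`. Hence `f - g` is of lower order
and orthogonal to everything of lower order, so `f = g` a.e. Since `σ_n, π_n` are real on the
circle and `⟨σ_n, π_n⟩_R = 0`, `‖Φ_m‖² = ‖g‖² = a_n² + (1 + β_n²) b_n²`.
-/

open MeasureTheory Complex Filter

noncomputable section

/-- The Laurent "cosine" `(z^n + z^(-n))/2`, equal to `cos (n θ)` for `z = e^(iθ)`. -/
def cosL (n : ℕ) (z : ℂ) : ℂ := (z ^ n + (z ^ n)⁻¹) / 2

/-- The Laurent "sine" `(z^n - z^(-n))/(2 i)`, equal to `sin (n θ)` for `z = e^(iθ)`. -/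
def sinL (n : ℕ) (z : ℂ) : ℂ := (z ^ n - (z ^ n)⁻¹) / (2 * I)

/-- The real pairing `⟨f, g⟩_R = ∫ f g dμ`. -/
def innR (μ : Measure ℂ) (f g : ℂ → ℂ) : ℂ := ∫ τ, f τ * g τ ∂μ

/-- A nontrivial probability measure `μ` on the unit circle (infinite support), together
with the data produced by the Gram–Schmidt procedure applied (w.r.t. `⟨·,·⟩_R`) to the
ordered trigonometric system `{1, sin θ, cos θ, …, sin nθ, cos nθ, …}` (written as
Laurent polynomials via `sin nθ = (z^n - z^(-n))/(2i)`, `cos nθ = (z^n + z^(-n))/2`):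
`b n * pii n` is `sin nθ` minus its orthogonal projection onto the span of the previous
elements; `a n * sig n` is `cos nθ` minus its orthogonal projection onto the span of the
previous elements (including `sin nθ`); `a n, b n > 0` are the corresponding norms, so
that `sig n`, `pii n` are the orthonormal trigonometric polynomials; and
`β n = ⟨cos nθ, (b n)⁻¹ pii n⟩_R`.  Conventions: `sig 0 = 1`, `pii 0 = 0`, `β 0 = 0`,
`a 0 = b 0 = 1`. -/
structure OTP where
  μ : Measure ℂ
  prob : IsProbabilityMeasure μ
  circ : μ {z : ℂ | ‖z‖ = 1}ᶜ = 0
  nontriv : ∀ s : Finset ℂ, μ ((s : Set ℂ))ᶜ ≠ 0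
  a : ℕ → ℝ
  b : ℕ → ℝ
  β : ℕ → ℝ
  sig : ℕ → ℂ → ℂ
  pii : ℕ → ℂ → ℂ
  ha : ∀ n, 0 < a n
  hb : ∀ n, 0 < b n
  a_zero : a 0 = 1
  b_zero : b 0 = 1
  β_zero : β 0 = 0
  sig_zero : ∀ z, sig 0 z = 1
  pii_zero : ∀ z, pii 0 z = 0
  pii_span : ∀ n, 1 ≤ n → ∃ c d : ℕ → ℝ, ∀ z : ℂ, z ≠ 0 →
    (b n : ℂ) * pii n z =
      sinL n z + ∑ k ∈ Finset.range n, ((c k : ℂ) * cosL k z + (d k : ℂ) * sinL k z)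
  pii_orth : ∀ n, 1 ≤ n → ∀ k < n,
    innR μ (fun z => (b n : ℂ) * pii n z) (cosL k) = 0 ∧
    innR μ (fun z => (b n : ℂ) * pii n z) (sinL k) = 0
  b_norm : ∀ n, 1 ≤ n →
    ((b n : ℂ)) ^ 2 = innR μ (fun z => (b n : ℂ) * pii n z) (fun z => (b n : ℂ) * pii n z)
  sig_span : ∀ n, 1 ≤ n → ∃ c d : ℕ → ℝ, ∃ e : ℝ, ∀ z : ℂ, z ≠ 0 →
    (a n : ℂ) * sig n z =
      cosL n z + (e : ℂ) * sinL n z +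
        ∑ k ∈ Finset.range n, ((c k : ℂ) * cosL k z + (d k : ℂ) * sinL k z)
  sig_orth : ∀ n, 1 ≤ n →
    (∀ k < n,
      innR μ (fun z => (a n : ℂ) * sig n z) (cosL k) = 0 ∧
      innR μ (fun z => (a n : ℂ) * sig n z) (sinL k) = 0) ∧
    innR μ (fun z => (a n : ℂ) * sig n z) (sinL n) = 0
  a_norm : ∀ n, 1 ≤ n →
    ((a n : ℂ)) ^ 2 = innR μ (fun z => (a n : ℂ) * sig n z) (fun z => (a n : ℂ) * sig n z)
  β_def : ∀ n, 1 ≤ n →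
    (β n : ℂ) = innR μ (cosL n) (fun z => ((b n : ℂ))⁻¹ * pii n z)

/-- The data of `OTP` together with the monic orthogonal polynomials on the unit circle:
`Φ n` is the (unique) monic polynomial of degree `n` with
`∫ conj (τ^j) * Φ n τ dμ = 0` for all `j < n`, and `κ n = ‖Φ n‖⁻¹ > 0` where
`‖Φ n‖² = ∫ |Φ n τ|² dμ`. -/
structure OPUC extends OTP where
  Φ : ℕ → Polynomial ℂ
  Φ_monic : ∀ n, (Φ n).Monic
  Φ_deg : ∀ n, (Φ n).natDegree = n
  Φ_orth : ∀ n, ∀ j < n, ∫ τ, (starRingEnd ℂ) (τ ^ j) * (Φ n).eval τ ∂μ = 0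
  κ : ℕ → ℝ
  κ_pos : ∀ n, 0 < κ n
  κ_def : ∀ n, (κ n) ^ 2 * ∫ τ, ‖(Φ n).eval τ‖ ^ 2 ∂μ = 1

open scoped ENNReal Polynomial

lemma ne_zero_of_norm_eq_one {E : Type*} [SeminormedAddGroup E] {z : E} (hz : ‖z‖ = 1) :
    z ≠ 0 :=
  ne_zero_of_norm_ne_zero (hz ▸ one_ne_zero)

lemma cosL_add_I_mul_sinL (k : ℕ) {z : ℂ} (hz : z ≠ 0) : cosL k z + I * sinL k z = z ^ k := by
  have := pow_ne_zero k hz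
  simp only [cosL, sinL]
  field_simp
  ring

lemma cosL_sub_I_mul_sinL (k : ℕ) {z : ℂ} (hz : z ≠ 0) :
    cosL k z - I * sinL k z = (z ^ k)⁻¹ := by
  have := pow_ne_zero k hz
  simp only [cosL, sinL]
  field_simp
  ring

lemma conj_pow_of_norm_eq_one {z : ℂ} (hz : ‖z‖ = 1) (k : ℕ) :
    (starRingEnd ℂ) (z ^ k) = (z ^ k)⁻¹ :=
  (inv_eq_conj (by rw [norm_pow, hz, one_pow])).symm

lemma conj_cosL {z : ℂ} (hz : ‖z‖ = 1) (k : ℕ) : (starRingEnd ℂ) (cosL k z) = cosL k z := by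
  simp only [cosL, map_div₀, map_add, map_inv₀, conj_pow_of_norm_eq_one hz, inv_inv, map_ofNat]
  ring

lemma conj_sinL {z : ℂ} (hz : ‖z‖ = 1) (k : ℕ) : (starRingEnd ℂ) (sinL k z) = sinL k z := by
  simp only [sinL, map_div₀, map_sub, map_mul, map_inv₀, conj_pow_of_norm_eq_one hz, inv_inv,
    conj_I, map_ofNat]
  ring

section Bounded

variable {μ : Measure ℂ}

lemma memLp_top_pow (hμ : ∀ᵐ z ∂μ, ‖z‖ = 1) (k : ℕ) : MemLp (fun z => z ^ k) ∞ μ :=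
  memLp_top_of_bound (measurable_id.pow_const k).aestronglyMeasurable 1 <| by
    filter_upwards [hμ] with z hz
    simp [hz]

lemma memLp_top_inv_pow (hμ : ∀ᵐ z ∂μ, ‖z‖ = 1) (k : ℕ) : MemLp (fun z => (z ^ k)⁻¹) ∞ μ :=
  memLp_top_of_bound (measurable_id.pow_const k).inv.aestronglyMeasurable 1 <| by
    filter_upwards [hμ] with z hz
    simp [hz]

lemma memLp_top_cosL (hμ : ∀ᵐ z ∂μ, ‖z‖ = 1) (k : ℕ) : MemLp (cosL k) ∞ μ := by
  convert ((memLp_top_pow hμ k).add (memLp_top_inv_pow hμ k)).const_mul (2⁻¹ : ℂ) using 1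
  funext z
  simp only [cosL, Pi.add_apply]
  ring

lemma memLp_top_sinL (hμ : ∀ᵐ z ∂μ, ‖z‖ = 1) (k : ℕ) : MemLp (sinL k) ∞ μ := by
  convert ((memLp_top_pow hμ k).sub (memLp_top_inv_pow hμ k)).const_mul (2 * I)⁻¹ using 1
  funext z
  simp only [sinL, Pi.sub_apply]
  ring

lemma memLp_top_eval (hμ : ∀ᵐ z ∂μ, ‖z‖ = 1) (P : ℂ[X]) : MemLp (fun z => P.eval z) ∞ μ := by
  simp only [Polynomial.eval_eq_sum_range]
  exact memLp_finsetSum _ fun j _ => (memLp_top_pow hμ j).const_mul _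

lemma integrable_mul_of_memLp_top {α 𝕜 : Type*} [MeasurableSpace α] [NormedRing 𝕜]
    {ν : Measure α} [IsFiniteMeasure ν] {F G : α → 𝕜} (hF : MemLp F ∞ ν) (hG : MemLp G ∞ ν) :
    Integrable (fun z => F z * G z) ν :=
  (hG.mul' hF).integrable le_top

end Bounded

section Pairing

variable {μ : Measure ℂ} {F G K : ℂ → ℂ}

lemma innR_comm (F G : ℂ → ℂ) : innR μ F G = innR μ G F := by
  simp only [innR, mul_comm]

lemma innR_const_mul_left (c : ℂ) (F K : ℂ → ℂ) :
    innR μ (fun z => c * F z) K = c * innR μ F K := by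
  simp only [innR, mul_assoc]
  exact integral_const_mul c _

lemma innR_add_left [IsFiniteMeasure μ] (hF : MemLp F ∞ μ) (hG : MemLp G ∞ μ)
    (hK : MemLp K ∞ μ) : innR μ (fun z => F z + G z) K = innR μ F K + innR μ G K := by
  simp only [innR, add_mul]
  exact integral_add (integrable_mul_of_memLp_top hF hK) (integrable_mul_of_memLp_top hG hK)

lemma innR_sub_left [IsFiniteMeasure μ] (hF : MemLp F ∞ μ) (hG : MemLp G ∞ μ)
    (hK : MemLp K ∞ μ) : innR μ (fun z => F z - G z) K = innR μ F K - innR μ G K := by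
  simp only [innR, sub_mul]
  exact integral_sub (integrable_mul_of_memLp_top hF hK) (integrable_mul_of_memLp_top hG hK)

lemma innR_congr_ae {F' G' : ℂ → ℂ} (hF : F =ᵐ[μ] F') (hG : G =ᵐ[μ] G') :
    innR μ F G = innR μ F' G' :=
  integral_congr_ae (by filter_upwards [hF, hG] with z h1 h2 using by rw [h1, h2])

end Pairing

def TrigSpan (m : ℕ) (F : ℂ → ℂ) : Prop :=
  ∃ γ δ : ℕ → ℂ, ∀ z : ℂ, ‖z‖ = 1 →
    F z = ∑ k ∈ Finset.range m, (γ k * cosL k z + δ k * sinL k z)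

namespace TrigSpan

variable {m : ℕ} {F G : ℂ → ℂ}

lemma congr (h : TrigSpan m F) (he : ∀ z : ℂ, ‖z‖ = 1 → F z = G z) : TrigSpan m G := by
  obtain ⟨γ, δ, hF⟩ := h
  exact ⟨γ, δ, fun z hz => he z hz ▸ hF z hz⟩

lemma zero : TrigSpan m fun _ => 0 :=
  ⟨0, 0, fun z _ => by simp⟩

lemma add (hF : TrigSpan m F) (hG : TrigSpan m G) : TrigSpan m fun z => F z + G z := by
  obtain ⟨γ, δ, hF⟩ := hF
  obtain ⟨γ', δ', hG⟩ := hG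
  refine ⟨γ + γ', δ + δ', fun z hz => ?_⟩
  dsimp only
  rw [hF z hz, hG z hz, ← Finset.sum_add_distrib]
  exact Finset.sum_congr rfl fun k _ => by simp only [Pi.add_apply]; ring

lemma const_mul (hF : TrigSpan m F) (c : ℂ) : TrigSpan m fun z => c * F z := by
  obtain ⟨γ, δ, hF⟩ := hF
  refine ⟨c • γ, c • δ, fun z hz => ?_⟩
  dsimp only
  rw [hF z hz, Finset.mul_sum]
  exact Finset.sum_congr rfl fun k _ => by simp only [Pi.smul_apply, smul_eq_mul]; ring

lemma sub (hF : TrigSpan m F) (hG : TrigSpan m G) : TrigSpan m fun z => F z - G z :=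
  (hF.add (hG.const_mul (-1))).congr fun z _ => by ring

lemma finsetSum {ι : Type*} (s : Finset ι) {F : ι → ℂ → ℂ} (h : ∀ i ∈ s, TrigSpan m (F i)) :
    TrigSpan m fun z => ∑ i ∈ s, F i z := by
  classical
  induction s using Finset.cons_induction with
  | empty => simpa using zero
  | cons i s his ih =>
    simp only [Finset.sum_cons]
    exact (h i (s.mem_cons_self i)).add (ih fun j hj => h j (Finset.mem_cons_of_mem hj))

lemma conj (hF : TrigSpan m F) : TrigSpan m fun z => (starRingEnd ℂ) (F z) := by
  obtain ⟨γ, δ, hF⟩ := hF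
  refine ⟨fun k => (starRingEnd ℂ) (γ k), fun k => (starRingEnd ℂ) (δ k), fun z hz => ?_⟩
  simp only [hF z hz, map_sum, map_add, map_mul, conj_cosL hz, conj_sinL hz]

lemma memLp_top {μ : Measure ℂ} (hμ : ∀ᵐ z ∂μ, ‖z‖ = 1) (hF : TrigSpan m F) :
    MemLp F ∞ μ := by
  obtain ⟨γ, δ, hF⟩ := hF
  have hsum : MemLp (fun z => ∑ k ∈ Finset.range m, (γ k * cosL k z + δ k * sinL k z)) ∞ μ :=
    memLp_finsetSum _ fun k _ =>
      ((memLp_top_cosL hμ k).const_mul (γ k)).add ((memLp_top_sinL hμ k).const_mul (δ k))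
  refine hsum.ae_eq ?_
  filter_upwards [hμ] with z hz using (hF z hz).symm

end TrigSpan

lemma trigSpan_sum (m : ℕ) (γ δ : ℕ → ℂ) :
    TrigSpan m fun z => ∑ k ∈ Finset.range m, (γ k * cosL k z + δ k * sinL k z) :=
  ⟨γ, δ, fun _ _ => rfl⟩

lemma trigSpan_cosL {m k : ℕ} (hk : k < m) : TrigSpan m (cosL k) :=
  ⟨Pi.single k 1, 0, fun z _ => by simp [Pi.single_apply, hk]⟩

lemma trigSpan_sinL {m k : ℕ} (hk : k < m) : TrigSpan m (sinL k) :=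
  ⟨0, Pi.single k 1, fun z _ => by simp [Pi.single_apply, hk]⟩

lemma TrigSpan.mono {m m' : ℕ} {F : ℂ → ℂ} (hF : TrigSpan m F) (h : m ≤ m') :
    TrigSpan m' F := by
  obtain ⟨γ, δ, hF⟩ := hF
  refine (TrigSpan.finsetSum (Finset.range m) fun k hk => ?_).congr fun z hz => (hF z hz).symm
  have hk' : k < m' := (Finset.mem_range.mp hk).trans_le h
  exact ((trigSpan_cosL hk').const_mul _).add ((trigSpan_sinL hk').const_mul _)

lemma trigSpan_zpow {m : ℕ} {i : ℤ} (hi : |i| < m) : TrigSpan m fun z => z ^ i := by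
  obtain ⟨k, rfl | rfl⟩ := Int.eq_nat_or_neg i
  · have hk : k < m := by simpa using hi
    refine ((trigSpan_cosL hk).add ((trigSpan_sinL hk).const_mul I)).congr fun z hz => ?_
    rw [zpow_natCast, cosL_add_I_mul_sinL k (ne_zero_of_norm_eq_one hz)]
  · have hk : k < m := by simpa using hi
    refine ((trigSpan_cosL hk).sub ((trigSpan_sinL hk).const_mul I)).congr fun z hz => ?_
    rw [zpow_neg, zpow_natCast, cosL_sub_I_mul_sinL k (ne_zero_of_norm_eq_one hz)]

def IsOrthTrig (μ : Measure ℂ) (m : ℕ) (F : ℂ → ℂ) : Prop :=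
  ∀ k < m, innR μ F (cosL k) = 0 ∧ innR μ F (sinL k) = 0

namespace IsOrthTrig

variable {μ : Measure ℂ} {m : ℕ} {F G K : ℂ → ℂ}

lemma innR_eq_zero [IsFiniteMeasure μ] (hμ : ∀ᵐ z ∂μ, ‖z‖ = 1) (hF : MemLp F ∞ μ)
    (hFo : IsOrthTrig μ m F) (hK : TrigSpan m K) : innR μ F K = 0 := by
  obtain ⟨γ, δ, hK⟩ := hK
  have hKae : K =ᵐ[μ] fun z => ∑ k ∈ Finset.range m, (γ k * cosL k z + δ k * sinL k z) := by
    filter_upwards [hμ] with z hz using hK z hz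
  have hcos k := integrable_mul_of_memLp_top hF (memLp_top_cosL hμ k)
  have hsin k := integrable_mul_of_memLp_top hF (memLp_top_sinL hμ k)
  calc innR μ F K
      = ∑ k ∈ Finset.range m, (γ k * innR μ F (cosL k) + δ k * innR μ F (sinL k)) := by
        rw [innR_congr_ae (ae_eq_refl F) hKae]
        simp only [innR, Finset.mul_sum, mul_add, mul_left_comm (F _)]
        rw [integral_finsetSum _ fun k _ => by
          exact ((hcos k).const_mul (γ k)).add ((hsin k).const_mul (δ k))]
        refine Finset.sum_congr rfl fun k _ => ?_
        rw [integral_add ((hcos k).const_mul _) ((hsin k).const_mul _), integral_const_mul,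
          integral_const_mul]
    _ = 0 := Finset.sum_eq_zero fun k hk => by
        rw [(hFo k (Finset.mem_range.mp hk)).1, (hFo k (Finset.mem_range.mp hk)).2]
        ring

lemma add [IsFiniteMeasure μ] (hμ : ∀ᵐ z ∂μ, ‖z‖ = 1) (hF : MemLp F ∞ μ) (hG : MemLp G ∞ μ)
    (hFo : IsOrthTrig μ m F) (hGo : IsOrthTrig μ m G) :
    IsOrthTrig μ m fun z => F z + G z := fun k hk => by
  rw [innR_add_left hF hG (memLp_top_cosL hμ k), innR_add_left hF hG (memLp_top_sinL hμ k),
    (hFo k hk).1, (hFo k hk).2, (hGo k hk).1, (hGo k hk).2]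
  simp

lemma const_mul (hFo : IsOrthTrig μ m F) (c : ℂ) : IsOrthTrig μ m fun z => c * F z :=
  fun k hk => by simp [innR_const_mul_left, (hFo k hk).1, (hFo k hk).2]

end IsOrthTrig

section Orthogonality

variable {μ : Measure ℂ} [IsFiniteMeasure μ] {m : ℕ} {F G : ℂ → ℂ}

lemma ae_eq_of_isOrthTrig_of_trigSpan_sub (hμ : ∀ᵐ z ∂μ, ‖z‖ = 1) (hF : MemLp F ∞ μ)
    (hG : MemLp G ∞ μ) (hFo : IsOrthTrig μ m F) (hGo : IsOrthTrig μ m G)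
    (hFG : TrigSpan m fun z => F z - G z) : F =ᵐ[μ] G := by
  set H : ℂ → ℂ := fun z => F z - G z
  have hH : MemLp H ∞ μ := hF.sub hG
  have hconj := hFG.conj
  -- `⟨H, conj H⟩_R = ∫ |H|²`, and `conj H` lies in the span that `F` and `G` are orthogonal to
  have hself : innR μ H (fun z => (starRingEnd ℂ) (H z)) = 0 := by
    rw [innR_sub_left hF hG (hconj.memLp_top hμ), hFo.innR_eq_zero hμ hF hconj,
      hGo.innR_eq_zero hμ hG hconj, sub_zero]
  have hnorm : ∫ z, ‖H z‖ ^ 2 ∂μ = 0 := by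
    have h : ((∫ z, ‖H z‖ ^ 2 ∂μ : ℝ) : ℂ) = innR μ H (fun z => (starRingEnd ℂ) (H z)) := by
      simp only [innR, mul_conj', ← ofReal_pow]
      exact integral_ofReal.symm
    exact_mod_cast h.trans hself
  have hint : Integrable (fun z => ‖H z‖ ^ 2) μ :=
    (integrable_mul_of_memLp_top hH.norm hH.norm).congr (ae_of_all _ fun z => (sq _).symm)
  filter_upwards [(integral_eq_zero_iff_of_nonneg (fun z => by positivity) hint).mp hnorm]
    with z hz
  simpa [H, sub_eq_zero] using hz

lemma isOrthTrig_of_innR_pow (hμ : ∀ᵐ z ∂μ, ‖z‖ = 1) (hF : MemLp F ∞ μ)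
    (h : ∀ k < m, innR μ F (fun z => z ^ k) = 0 ∧ innR μ F (fun z => (z ^ k)⁻¹) = 0) :
    IsOrthTrig μ m F := by
  intro k hk
  have hcos : cosL k = fun z => 2⁻¹ * z ^ k + 2⁻¹ * (z ^ k)⁻¹ := by
    funext z; simp only [cosL]; ring
  have hsin : sinL k = fun z => (2 * I)⁻¹ * z ^ k - (2 * I)⁻¹ * (z ^ k)⁻¹ := by
    funext z; simp only [sinL]; ring
  have hp c := (memLp_top_pow hμ k).const_mul (μ := μ) c
  have hq c := (memLp_top_inv_pow hμ k).const_mul (μ := μ) c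
  have hpow : innR μ (fun z => z ^ k) F = 0 := (innR_comm _ _).trans (h k hk).1
  have hinv : innR μ (fun z => (z ^ k)⁻¹) F = 0 := (innR_comm _ _).trans (h k hk).2
  constructor
  · rw [innR_comm, hcos, innR_add_left (hp _) (hq _) hF, innR_const_mul_left,
      innR_const_mul_left, hpow, hinv, mul_zero, add_zero]
  · rw [innR_comm, hsin, innR_sub_left (hp _) (hq _) hF, innR_const_mul_left,
      innR_const_mul_left, hpow, hinv, mul_zero, sub_zero]

end Orthogonality

lemma trigSpan_inv_pow_mul_eval_sub_pow {n : ℕ} (hn : 1 ≤ n) {P : ℂ[X]} (hP : P.Monic)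
    (hdeg : P.natDegree = 2 * n - 1) :
    TrigSpan n fun z => (z ^ (n - 1))⁻¹ * P.eval z - z ^ n := by
  refine (TrigSpan.finsetSum (Finset.range (2 * n - 1)) fun j hj =>
    (trigSpan_zpow (i := (j : ℤ) - (n - 1 : ℕ)) ?_).const_mul (P.coeff j)).congr fun z hz => ?_
  · have := Finset.mem_range.mp hj
    rw [abs_lt]
    omega
  · have hz0 : z ≠ 0 := ne_zero_of_norm_eq_one hz
    have htop : (z ^ (n - 1))⁻¹ * z ^ (2 * n - 1) = z ^ n := by
      rw [show 2 * n - 1 = (n - 1) + n by omega, pow_add, inv_mul_cancel_left₀ (pow_ne_zero _ hz0)]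
    rw [Polynomial.eval_eq_sum_range, hdeg, Finset.sum_range_succ, ← hdeg, hP.coeff_natDegree,
      hdeg, one_mul, mul_add, htop, add_sub_cancel_right, Finset.mul_sum]
    refine Finset.sum_congr rfl fun j _ => ?_
    rw [zpow_sub₀ hz0, zpow_natCast, zpow_natCast]
    ring

lemma isOrthTrig_inv_pow_mul_eval {μ : Measure ℂ} [IsFiniteMeasure μ] (hμ : ∀ᵐ z ∂μ, ‖z‖ = 1)
    {n : ℕ} {P : ℂ[X]} (hP : ∀ j < 2 * n - 1, ∫ τ, (starRingEnd ℂ) (τ ^ j) * P.eval τ ∂μ = 0) :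
    IsOrthTrig μ n fun z => (z ^ (n - 1))⁻¹ * P.eval z := by
  refine isOrthTrig_of_innR_pow hμ ((memLp_top_eval hμ P).mul' (memLp_top_inv_pow hμ _))
    fun k hk => ⟨?_, ?_⟩
  · rw [← hP (n - 1 - k) (by omega)]
    refine integral_congr_ae ?_
    filter_upwards [hμ] with z hz
    have hzk : z ^ k ≠ 0 := pow_ne_zero _ (ne_zero_of_norm_eq_one hz)
    have hsplit : z ^ (n - 1) = z ^ (n - 1 - k) * z ^ k := by rw [← pow_add]; congr 1; omega
    rw [conj_pow_of_norm_eq_one hz, hsplit, mul_inv]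
    field_simp
  · rw [← hP (n - 1 + k) (by omega)]
    refine integral_congr_ae ?_
    filter_upwards [hμ] with z hz
    rw [conj_pow_of_norm_eq_one hz, pow_add, mul_inv]
    ring

namespace OTP

variable (D : OTP) {n : ℕ}

instance : IsProbabilityMeasure D.μ := D.prob

lemma ae_norm_eq_one : ∀ᵐ z ∂D.μ, ‖z‖ = 1 := ae_iff.mpr D.circ

def aSig (n : ℕ) (z : ℂ) : ℂ := D.a n * D.sig n z

def bPii (n : ℕ) (z : ℂ) : ℂ := D.b n * D.pii n z

lemma trigSpan_bPii_sub_sinL (hn : 1 ≤ n) : TrigSpan n fun z => D.bPii n z - sinL n z := by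
  obtain ⟨c, d, h⟩ := D.pii_span n hn
  refine (trigSpan_sum n (fun k => c k) (fun k => d k)).congr fun z hz => ?_
  rw [bPii, h z (ne_zero_of_norm_eq_one hz)]
  ring

lemma exists_trigSpan_aSig_sub (hn : 1 ≤ n) :
    ∃ e : ℝ, TrigSpan n fun z => D.aSig n z - cosL n z - e * sinL n z := by
  obtain ⟨c, d, e, h⟩ := D.sig_span n hn
  refine ⟨e, (trigSpan_sum n (fun k => c k) (fun k => d k)).congr fun z hz => ?_⟩
  rw [aSig, h z (ne_zero_of_norm_eq_one hz)]
  ring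

lemma conj_aSig (hn : 1 ≤ n) {z : ℂ} (hz : ‖z‖ = 1) :
    (starRingEnd ℂ) (D.aSig n z) = D.aSig n z := by
  obtain ⟨c, d, e, h⟩ := D.sig_span n hn
  simp only [aSig, h z (ne_zero_of_norm_eq_one hz), map_add, map_mul, map_sum,
    conj_ofReal, conj_cosL hz, conj_sinL hz]

lemma conj_bPii (hn : 1 ≤ n) {z : ℂ} (hz : ‖z‖ = 1) :
    (starRingEnd ℂ) (D.bPii n z) = D.bPii n z := by
  obtain ⟨c, d, h⟩ := D.pii_span n hn
  simp only [bPii, h z (ne_zero_of_norm_eq_one hz), map_add, map_mul, map_sum,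
    conj_ofReal, conj_cosL hz, conj_sinL hz]

lemma memLp_top_bPii (hn : 1 ≤ n) : MemLp (D.bPii n) ∞ D.μ :=
  ((((D.trigSpan_bPii_sub_sinL hn).mono n.le_succ).add (trigSpan_sinL n.lt_succ_self)).congr
    fun _ _ => sub_add_cancel _ _).memLp_top D.ae_norm_eq_one

lemma memLp_top_aSig (hn : 1 ≤ n) : MemLp (D.aSig n) ∞ D.μ := by
  obtain ⟨e, he⟩ := D.exists_trigSpan_aSig_sub hn
  refine ((((he.mono n.le_succ).add (trigSpan_cosL n.lt_succ_self)).add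
    ((trigSpan_sinL n.lt_succ_self).const_mul e)).congr fun _ _ => ?_).memLp_top D.ae_norm_eq_one
  ring

lemma isOrthTrig_aSig (hn : 1 ≤ n) : IsOrthTrig D.μ n (D.aSig n) := (D.sig_orth n hn).1

lemma isOrthTrig_bPii (hn : 1 ≤ n) : IsOrthTrig D.μ n (D.bPii n) := D.pii_orth n hn

lemma innR_aSig_self (hn : 1 ≤ n) : innR D.μ (D.aSig n) (D.aSig n) = D.a n ^ 2 :=
  (D.a_norm n hn).symm

lemma innR_bPii_self (hn : 1 ≤ n) : innR D.μ (D.bPii n) (D.bPii n) = D.b n ^ 2 :=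
  (D.b_norm n hn).symm

lemma innR_bPii_aSig (hn : 1 ≤ n) : innR D.μ (D.bPii n) (D.aSig n) = 0 := by
  have hsub := innR_sub_left (D.memLp_top_bPii hn) (memLp_top_sinL D.ae_norm_eq_one n)
    (D.memLp_top_aSig hn)
  have hlow : innR D.μ (fun z => D.bPii n z - sinL n z) (D.aSig n) = 0 := by
    rw [innR_comm]
    exact (D.isOrthTrig_aSig hn).innR_eq_zero D.ae_norm_eq_one (D.memLp_top_aSig hn)
      (D.trigSpan_bPii_sub_sinL hn)
  have hsin : innR D.μ (sinL n) (D.aSig n) = 0 := by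
    rw [innR_comm]
    exact (D.sig_orth n hn).2
  linear_combination hlow - hsub + hsin

lemma innR_sinL_bPii (hn : 1 ≤ n) : innR D.μ (sinL n) (D.bPii n) = D.b n ^ 2 := by
  have hsub := innR_sub_left (D.memLp_top_bPii hn) (memLp_top_sinL D.ae_norm_eq_one n)
    (D.memLp_top_bPii hn)
  have hlow : innR D.μ (fun z => D.bPii n z - sinL n z) (D.bPii n) = 0 := by
    rw [innR_comm]
    exact (D.isOrthTrig_bPii hn).innR_eq_zero D.ae_norm_eq_one (D.memLp_top_bPii hn)
      (D.trigSpan_bPii_sub_sinL hn)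
  linear_combination hsub - hlow + D.innR_bPii_self hn

lemma innR_cosL_bPii (hn : 1 ≤ n) : innR D.μ (cosL n) (D.bPii n) = D.b n ^ 2 * D.β n := by
  have hb : (D.b n : ℂ) ≠ 0 := ofReal_ne_zero.mpr (D.hb n).ne'
  have hbPii : D.bPii n = fun z => (D.b n : ℂ) ^ 2 * ((D.b n : ℂ)⁻¹ * D.pii n z) := by
    funext z
    rw [bPii]
    field_simp
  rw [D.β_def n hn, hbPii, innR_comm, innR_const_mul_left, innR_comm]

lemma trigSpan_aSig_sub (hn : 1 ≤ n) :
    TrigSpan n fun z => D.aSig n z - cosL n z + D.β n * sinL n z := by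
  obtain ⟨e, he⟩ := D.exists_trigSpan_aSig_sub hn
  have hμ := D.ae_norm_eq_one
  have hlow : innR D.μ (fun z => D.aSig n z - cosL n z - e * sinL n z) (D.bPii n) = 0 := by
    rw [innR_comm]
    exact (D.isOrthTrig_bPii hn).innR_eq_zero hμ (D.memLp_top_bPii hn) he
  -- pairing with `b_n π_n` turns `he` into `0 = -b_n² β_n - e b_n²`
  have h1 := innR_sub_left (F := fun z => D.aSig n z - cosL n z) (G := fun z => e * sinL n z)
    ((D.memLp_top_aSig hn).sub (memLp_top_cosL hμ n)) ((memLp_top_sinL hμ n).const_mul _)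
    (D.memLp_top_bPii hn)
  have h2 := innR_sub_left (D.memLp_top_aSig hn) (memLp_top_cosL hμ n) (D.memLp_top_bPii hn)
  rw [innR_const_mul_left, D.innR_sinL_bPii hn] at h1
  rw [D.innR_cosL_bPii hn, innR_comm (D.aSig n), D.innR_bPii_aSig hn] at h2
  have hb : (D.b n : ℂ) ^ 2 ≠ 0 := pow_ne_zero _ (ofReal_ne_zero.mpr (D.hb n).ne')
  have he_eq : (e : ℂ) = -D.β n := by
    have hsum : ((D.β n : ℂ) + e) * D.b n ^ 2 = 0 := by linear_combination h1 + h2 - hlow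
    linear_combination (mul_eq_zero.mp hsum).resolve_right hb
  exact he.congr fun z _ => by rw [he_eq]; ring

def monicTrig (n : ℕ) (z : ℂ) : ℂ := D.aSig n z + (D.β n + I) * D.bPii n z

lemma trigSpan_monicTrig_sub_pow (hn : 1 ≤ n) : TrigSpan n fun z => D.monicTrig n z - z ^ n :=
  ((D.trigSpan_aSig_sub hn).add ((D.trigSpan_bPii_sub_sinL hn).const_mul (D.β n + I))).congr
    fun z hz => by
      rw [monicTrig, ← cosL_add_I_mul_sinL n (ne_zero_of_norm_eq_one hz)]
      ring

lemma memLp_top_monicTrig (hn : 1 ≤ n) : MemLp (D.monicTrig n) ∞ D.μ :=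
  (D.memLp_top_aSig hn).add ((D.memLp_top_bPii hn).const_mul _)

lemma isOrthTrig_monicTrig (hn : 1 ≤ n) : IsOrthTrig D.μ n (D.monicTrig n) :=
  (D.isOrthTrig_aSig hn).add D.ae_norm_eq_one (D.memLp_top_aSig hn)
    ((D.memLp_top_bPii hn).const_mul _) ((D.isOrthTrig_bPii hn).const_mul _)

lemma integral_norm_sq_monicTrig (hn : 1 ≤ n) :
    ∫ z, ‖D.monicTrig n z‖ ^ 2 ∂D.μ = D.a n ^ 2 + D.b n ^ 2 * (1 + D.β n ^ 2) := by
  have hσ := D.memLp_top_aSig hn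
  have hπ := D.memLp_top_bPii hn
  have hg := D.memLp_top_monicTrig hn
  have hconj : (fun z => (starRingEnd ℂ) (D.monicTrig n z)) =ᵐ[D.μ]
      fun z => D.aSig n z + (D.β n - I) * D.bPii n z := by
    filter_upwards [D.ae_norm_eq_one] with z hz
    simp only [monicTrig, map_add, map_mul, D.conj_aSig hn hz, D.conj_bPii hn hz, conj_ofReal,
      conj_I, sub_eq_add_neg]
  have hgσ : innR D.μ (D.aSig n) (D.monicTrig n) = D.a n ^ 2 := by
    rw [innR_comm]
    unfold monicTrig
    rw [innR_add_left hσ (hπ.const_mul _) hσ, innR_const_mul_left,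
      D.innR_aSig_self hn, D.innR_bPii_aSig hn, mul_zero, add_zero]
  have hgπ : innR D.μ (D.bPii n) (D.monicTrig n) = (D.β n + I) * D.b n ^ 2 := by
    rw [innR_comm]
    unfold monicTrig
    rw [innR_add_left hσ (hπ.const_mul _) hπ, innR_const_mul_left,
      D.innR_bPii_self hn, innR_comm, D.innR_bPii_aSig hn, zero_add]
  have h : ((∫ z, ‖D.monicTrig n z‖ ^ 2 ∂D.μ : ℝ) : ℂ)
      = ((D.a n ^ 2 + D.b n ^ 2 * (1 + D.β n ^ 2) : ℝ) : ℂ) := by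
    calc ((∫ z, ‖D.monicTrig n z‖ ^ 2 ∂D.μ : ℝ) : ℂ)
        = ∫ z, ((‖D.monicTrig n z‖ ^ 2 : ℝ) : ℂ) ∂D.μ := integral_ofReal.symm
      _ = innR D.μ (fun z => D.aSig n z + (D.β n - I) * D.bPii n z) (D.monicTrig n) := by
          rw [innR_comm, ← innR_congr_ae (ae_eq_refl _) hconj]
          simp only [innR, mul_conj', ofReal_pow]
      _ = D.a n ^ 2 + (D.β n - I) * ((D.β n + I) * D.b n ^ 2) := by
          rw [innR_add_left hσ (hπ.const_mul _) hg, innR_const_mul_left, hgσ, hgπ]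
      _ = _ := by
          push_cast
          linear_combination -(D.b n : ℂ) ^ 2 * I_sq
  exact_mod_cast h

end OTP

/-- For `n ≥ 1`, `κ_{2n-1}² = [a_n² + b_n²(1 + β_n²)]⁻¹`. -/
theorem kappa_odd_sq (D : OPUC) (n : ℕ) (hn : 1 ≤ n) :
    (D.κ (2 * n - 1)) ^ 2 = ((D.a n) ^ 2 + (D.b n) ^ 2 * (1 + (D.β n) ^ 2))⁻¹ := by
  have hμ := D.ae_norm_eq_one
  set P := D.Φ (2 * n - 1)
  have hP : (fun z => (z ^ (n - 1))⁻¹ * P.eval z) =ᵐ[D.μ] D.monicTrig n :=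
    ae_eq_of_isOrthTrig_of_trigSpan_sub hμ ((memLp_top_eval hμ P).mul' (memLp_top_inv_pow hμ _))
      (D.memLp_top_monicTrig hn) (isOrthTrig_inv_pow_mul_eval hμ (D.Φ_orth _))
      (D.isOrthTrig_monicTrig hn)
      (((trigSpan_inv_pow_mul_eval_sub_pow hn (D.Φ_monic _) (D.Φ_deg _)).sub
        (D.trigSpan_monicTrig_sub_pow hn)).congr fun _ _ => sub_sub_sub_cancel_right _ _ _)
  have hnorm : ∫ z, ‖P.eval z‖ ^ 2 ∂D.μ = ∫ z, ‖D.monicTrig n z‖ ^ 2 ∂D.μ := by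
    refine integral_congr_ae ?_
    filter_upwards [hμ, hP] with z hz hPz
    rw [← hPz, norm_mul, norm_inv, norm_pow, hz, one_pow, inv_one, one_mul]
  have hκ := D.κ_def (2 * n - 1)
  rw [hnorm, D.integral_norm_sq_monicTrig hn] at hκ
  exact eq_inv_of_mul_eq_one_left hκ
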